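/- arXiv:2603.10096 — 2 statements merged into one kernel-verified Lean document; each statement's English description precedes it below -/
import Mathlib

section
/- Let H : ℝ → Matrix (Fin 2) (Fin 2) ℝ be differentiable with H(t) symmetric for all t. Suppose at t₀ the smallest eigenvalue λ_min(t₀) is simple, and let v(t) be a smoothly chosen unit eigenvector for λ_min(t) near t₀. Then λ_min is differentiable at t₀ and its derivative equals v(t₀)ᵀ · H'(t₀) · v(t₀). -/
open scoped Matrix

/-- Derivative of a simple smallest eigenvalue of a differentiable symmetric matrix family:
`λ_min'(t₀) = v(t₀)ᵀ H'(t₀) v(t₀)`. -/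
theorem deriv_smallest_eigenvalue
    (H H' : ℝ → Matrix (Fin 2) (Fin 2) ℝ)
    (lam : ℝ → ℝ) (v : ℝ → Fin 2 → ℝ) (t₀ : ℝ)
    -- H is differentiable (entrywise) with derivative H'
    (hH : ∀ t, ∀ i j, HasDerivAt (fun s => H s i j) (H' t i j) t)
    -- H(t) is symmetric for all t
    (hsymm : ∀ t, (H t)ᵀ = H t)
    -- lam t is an eigenvalue of H(t) with eigenvector v(t)
    (heig : ∀ t, H t *ᵥ v t = lam t • v t)
    -- lam t is the smallest eigenvalue of H(t)
    (hmin : ∀ t, ∀ μ : ℝ, ∀ w : Fin 2 → ℝ, w ≠ 0 → H t *ᵥ w = μ • w → lam t ≤ μ)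
    -- v(t) is a unit eigenvector
    (hunit : ∀ t, v t ⬝ᵥ v t = 1)
    -- the smallest eigenvalue is simple at t₀ (its eigenspace is one-dimensional)
    (hsimple : ∀ w : Fin 2 → ℝ, H t₀ *ᵥ w = lam t₀ • w → ∃ c : ℝ, w = c • v t₀)
    -- v is chosen smoothly (differentiably) near t₀
    (hv : ∀ i, ∀ᶠ t in nhds t₀, DifferentiableAt ℝ (fun s => v s i) t) :
    HasDerivAt lam (v t₀ ⬝ᵥ (H' t₀ *ᵥ v t₀)) t₀ := by
  -- derivative of v at t₀
  have hvd : ∀ i, DifferentiableAt ℝ (fun s => v s i) t₀ := fun i => (hv i).self_of_nhds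
  set v' : Fin 2 → ℝ := fun i => deriv (fun s => v s i) t₀ with hv'def
  have hv' : ∀ i, HasDerivAt (fun s => v s i) (v' i) t₀ := fun i =>
    (hvd i).hasDerivAt
  -- eigen equations at t₀, componentwise
  have he : ∀ i, H t₀ i 0 * v t₀ 0 + H t₀ i 1 * v t₀ 1 = lam t₀ * v t₀ i := by
    intro i
    have := congrFun (heig t₀) i
    simpa [Matrix.mulVec, dotProduct, Fin.sum_univ_two, mul_comm] using this
  -- symmetry at t₀
  have hs : H t₀ 0 1 = H t₀ 1 0 := by
    have := congrFun (congrFun (hsymm t₀) 0) 1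
    simpa [Matrix.transpose] using this.symm
  -- orthogonality: v ⬝ v' = 0
  have horth : v t₀ 0 * v' 0 + v t₀ 1 * v' 1 = 0 := by
    have h1 : HasDerivAt (fun t => v t 0 * v t 0 + v t 1 * v t 1)
        (v' 0 * v t₀ 0 + v t₀ 0 * v' 0 + (v' 1 * v t₀ 1 + v t₀ 1 * v' 1)) t₀ :=
      ((hv' 0).mul (hv' 0)).add ((hv' 1).mul (hv' 1))
    have h2 : (fun t => v t 0 * v t 0 + v t 1 * v t 1) = fun _ => (1 : ℝ) := by
      funext t
      have := hunit t
      simpa [dotProduct, Fin.sum_univ_two] using this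
    rw [h2] at h1
    have h3 : v' 0 * v t₀ 0 + v t₀ 0 * v' 0 + (v' 1 * v t₀ 1 + v t₀ 1 * v' 1) = 0 := by
      have := (hasDerivAt_const t₀ (1 : ℝ)).unique h1
      linarith [this]
    nlinarith [h3]
  -- lam equals the Rayleigh quotient
  have hlam : lam = fun t => v t 0 * (H t 0 0 * v t 0 + H t 0 1 * v t 1)
      + v t 1 * (H t 1 0 * v t 0 + H t 1 1 * v t 1) := by
    funext t
    have h1 : v t ⬝ᵥ (H t *ᵥ v t) = lam t := by
      rw [heig t, dotProduct_smul, hunit t]; simp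
    have h2 : v t ⬝ᵥ (H t *ᵥ v t) = v t 0 * (H t 0 0 * v t 0 + H t 0 1 * v t 1)
        + v t 1 * (H t 1 0 * v t 0 + H t 1 1 * v t 1) := by
      simp [Matrix.mulVec, dotProduct, Fin.sum_univ_two]
    rw [← h1, h2]
  -- derivative of the Rayleigh quotient
  have hR : HasDerivAt (fun t => v t 0 * (H t 0 0 * v t 0 + H t 0 1 * v t 1)
      + v t 1 * (H t 1 0 * v t 0 + H t 1 1 * v t 1))
      (v' 0 * (H t₀ 0 0 * v t₀ 0 + H t₀ 0 1 * v t₀ 1)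
        + v t₀ 0 * ((H' t₀ 0 0 * v t₀ 0 + H t₀ 0 0 * v' 0)
          + (H' t₀ 0 1 * v t₀ 1 + H t₀ 0 1 * v' 1))
        + (v' 1 * (H t₀ 1 0 * v t₀ 0 + H t₀ 1 1 * v t₀ 1)
        + v t₀ 1 * ((H' t₀ 1 0 * v t₀ 0 + H t₀ 1 0 * v' 0)
          + (H' t₀ 1 1 * v t₀ 1 + H t₀ 1 1 * v' 1)))) t₀ := by
    exact ((hv' 0).mul (((hH t₀ 0 0).mul (hv' 0)).add ((hH t₀ 0 1).mul (hv' 1)))).add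
      ((hv' 1).mul (((hH t₀ 1 0).mul (hv' 0)).add ((hH t₀ 1 1).mul (hv' 1))))
  rw [hlam]
  convert hR using 1
  have h0 := he 0
  have h1 := he 1
  have hgoal : v t₀ ⬝ᵥ (H' t₀ *ᵥ v t₀) = v t₀ 0 * (H' t₀ 0 0 * v t₀ 0 + H' t₀ 0 1 * v t₀ 1)
      + v t₀ 1 * (H' t₀ 1 0 * v t₀ 0 + H' t₀ 1 1 * v t₀ 1) := by
    simp [Matrix.mulVec, dotProduct, Fin.sum_univ_two]
  rw [hgoal]
  linear_combination (-2 * v' 0) * h0 + (-2 * v' 1) * h1 + (v' 0 * v t₀ 1 - v' 1 * v t₀ 0) * hs + (-2 * lam t₀) * horth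
end

section
/- Let A be a real symmetric n×n matrix with spectral decomposition A = Q Λ Qᵀ where Q is orthogonal and Λ = diag(λ₁,…,λₙ). Then the matrix Q Λ₊ Qᵀ, where Λ₊ = diag(max(λ₁,0),…,max(λₙ,0)), is the unique minimizer over the set of symmetric positive semidefinite matrices Y of the Frobenius norm ‖A − Y‖_F. -/
open scoped Matrix

attribute [local instance] Matrix.frobeniusNormedAddCommGroup

/-!
Write `D = diag λ`, `P = diag (max λᵢ 0)` and `A₊ = Q P Qᵀ`. Conjugation by the orthogonal `Q`
preserves the Frobenius norm, so with `Z = Qᵀ Y Q` (again PSD, hence with nonnegative diagonal) everything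
reduces to the diagonal picture, where `D - P` and `P - Z` have entrywise nonnegative product:
`D - P` vanishes off the diagonal, and on it `λᵢ - max λᵢ 0 ≤ 0` is nonzero only when
`max λᵢ 0 - Zᵢᵢ = -Zᵢᵢ ≤ 0`. This gives the Pythagorean inequality
`‖A - A₊‖² + ‖A₊ - Y‖² ≤ ‖A - Y‖²`, from which minimality and uniqueness both follow.
-/

namespace Matrix

variable {l m n : Type*} [Fintype l] [Fintype m] [Fintype n]

theorem frobenius_norm_sq_eq_sum {α : Type*} [NormedAddCommGroup α] (A : Matrix m n α) :
    ‖A‖ ^ 2 = ∑ i, ∑ j, ‖A i j‖ ^ 2 := by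
  rw [frobenius_norm_def, ← Real.sqrt_eq_rpow, Real.sq_sqrt (by positivity)]
  simp_rw [Real.rpow_two]

theorem frobenius_norm_sq_eq_trace (A : Matrix m n ℝ) : ‖A‖ ^ 2 = trace (Aᵀ * A) := by
  rw [frobenius_norm_sq_eq_sum]
  simp only [Real.norm_eq_abs, sq, abs_mul_abs_self, trace, diag, mul_apply, transpose_apply]
  exact Finset.sum_comm

theorem frobenius_norm_sq_add_le_of_mul_nonneg {M N : Matrix m n ℝ}
    (h : ∀ i j, 0 ≤ M i j * N i j) : ‖M‖ ^ 2 + ‖N‖ ^ 2 ≤ ‖M + N‖ ^ 2 := by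
  simp only [frobenius_norm_sq_eq_sum, Real.norm_eq_abs, sq_abs, add_apply,
    ← Finset.sum_add_distrib]
  gcongr with i _ j _
  nlinarith [h i j]

variable [DecidableEq m]

theorem frobenius_norm_mul_of_transpose_mul_self {Q : Matrix l m ℝ} (hQ : Qᵀ * Q = 1)
    (M : Matrix m n ℝ) : ‖Q * M‖ = ‖M‖ := by
  have hsq : ‖Q * M‖ ^ 2 = ‖M‖ ^ 2 := by
    rw [frobenius_norm_sq_eq_trace, frobenius_norm_sq_eq_trace, transpose_mul,
      Matrix.mul_assoc, ← Matrix.mul_assoc Qᵀ, hQ, Matrix.one_mul]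
  exact (sq_eq_sq₀ (norm_nonneg _) (norm_nonneg _)).1 hsq

theorem frobenius_norm_mul_transpose_of_transpose_mul_self {Q : Matrix l m ℝ}
    (hQ : Qᵀ * Q = 1) (M : Matrix n m ℝ) : ‖M * Qᵀ‖ = ‖M‖ := by
  rw [← frobenius_norm_transpose, transpose_mul, transpose_transpose,
    frobenius_norm_mul_of_transpose_mul_self hQ, frobenius_norm_transpose]

variable [DecidableEq n]

theorem frobenius_norm_conj_orthogonal {Q : Matrix n n ℝ} (hQ : Qᵀ * Q = 1)
    (M : Matrix n n ℝ) : ‖Q * M * Qᵀ‖ = ‖M‖ := by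
  rw [frobenius_norm_mul_transpose_of_transpose_mul_self hQ,
    frobenius_norm_mul_of_transpose_mul_self hQ]

theorem frobenius_norm_diagonal_sub_max_zero_sq_add_le (d : n → ℝ) {Z : Matrix n n ℝ}
    (hZ : ∀ i, 0 ≤ Z i i) :
    ‖diagonal d - diagonal (fun i => max (d i) 0)‖ ^ 2 +
        ‖diagonal (fun i => max (d i) 0) - Z‖ ^ 2 ≤ ‖diagonal d - Z‖ ^ 2 := by
  rw [← sub_add_sub_cancel (diagonal d) (diagonal fun i => max (d i) 0) Z]
  refine frobenius_norm_sq_add_le_of_mul_nonneg fun i j => ?_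
  rcases eq_or_ne i j with rfl | hij
  · simp only [Matrix.sub_apply, diagonal_apply_eq]
    rcases le_total 0 (d i) with hd | hd
    · simp [max_eq_left hd]
    · rw [max_eq_right hd]
      nlinarith [hZ i]
  · simp [diagonal_apply_ne _ hij]

theorem frobenius_norm_sub_conj_max_zero_sq_add_le {A Q Y : Matrix n n ℝ} {lam : n → ℝ}
    (hQ : Qᵀ * Q = 1) (hdecomp : A = Q * diagonal lam * Qᵀ) (hY : Y.PosSemidef) :
    ‖A - Q * diagonal (fun i => max (lam i) 0) * Qᵀ‖ ^ 2 +
        ‖Q * diagonal (fun i => max (lam i) 0) * Qᵀ - Y‖ ^ 2 ≤ ‖A - Y‖ ^ 2 := by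
  set Z := Qᵀ * Y * Q
  have hZ : Z.PosSemidef := by simpa using hY.conjTranspose_mul_mul_same Q
  have hY_eq : Y = Q * Z * Qᵀ := by
    have hQQ : Q * Qᵀ = 1 := mul_eq_one_comm.mp hQ
    simp only [Z, Matrix.mul_assoc, hQQ, Matrix.mul_one]
    rw [← Matrix.mul_assoc, hQQ, Matrix.one_mul]
  have conj_sub (M N : Matrix n n ℝ) : Q * M * Qᵀ - Q * N * Qᵀ = Q * (M - N) * Qᵀ := by
    rw [Matrix.mul_sub, Matrix.sub_mul]
  rw [hdecomp, hY_eq]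
  simp only [conj_sub, frobenius_norm_conj_orthogonal hQ]
  exact frobenius_norm_diagonal_sub_max_zero_sq_add_le lam fun i => hZ.diag_nonneg

end Matrix

open Matrix

theorem psd_projection_unique_minimizer_general {n : ℕ}
    (A Q : Matrix (Fin n) (Fin n) ℝ) (lam : Fin n → ℝ)
    (hQ : Qᵀ * Q = 1)
    (hdecomp : A = Q * Matrix.diagonal lam * Qᵀ) :
    (Q * Matrix.diagonal (fun i => max (lam i) 0) * Qᵀ).PosSemidef ∧
    (∀ Y : Matrix (Fin n) (Fin n) ℝ, Y.PosSemidef →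
      ‖A - Q * Matrix.diagonal (fun i => max (lam i) 0) * Qᵀ‖ ≤ ‖A - Y‖) ∧
    (∀ Y : Matrix (Fin n) (Fin n) ℝ, Y.PosSemidef →
      Y ≠ Q * Matrix.diagonal (fun i => max (lam i) 0) * Qᵀ →
      ‖A - Q * Matrix.diagonal (fun i => max (lam i) 0) * Qᵀ‖ < ‖A - Y‖) := by
  have hpsd : (Q * diagonal (fun i => max (lam i) 0) * Qᵀ).PosSemidef := by
    simpa using (PosSemidef.diagonal fun i => le_max_right (lam i) 0).mul_mul_conjTranspose_same Q
  have pythagoras := fun Y (hY : PosSemidef Y) =>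
    frobenius_norm_sub_conj_max_zero_sq_add_le hQ hdecomp hY
  refine ⟨hpsd, fun Y hY => ?_, fun Y hY hne => ?_⟩
  · have := pythagoras Y hY
    exact (sq_le_sq₀ (norm_nonneg _) (norm_nonneg _)).1 (by nlinarith)
  · have := pythagoras Y hY
    have hpos : 0 < ‖Q * diagonal (fun i => max (lam i) 0) * Qᵀ - Y‖ :=
      norm_pos_iff.2 (sub_ne_zero.2 hne.symm)
    exact (sq_lt_sq₀ (norm_nonneg _) (norm_nonneg _)).1 (by nlinarith)

/-- Eigenvalue clipping gives the unique Frobenius-norm projection of a symmetric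
matrix onto the PSD cone. -/
theorem psd_projection_unique_minimizer {n : ℕ}
    (A Q : Matrix (Fin n) (Fin n) ℝ) (lam : Fin n → ℝ)
    (hA : Aᵀ = A)
    (hQ : Qᵀ * Q = 1)
    (hdecomp : A = Q * Matrix.diagonal lam * Qᵀ) :
    (Q * Matrix.diagonal (fun i => max (lam i) 0) * Qᵀ).PosSemidef ∧
    (∀ Y : Matrix (Fin n) (Fin n) ℝ, Y.PosSemidef →
      ‖A - Q * Matrix.diagonal (fun i => max (lam i) 0) * Qᵀ‖ ≤ ‖A - Y‖) ∧
    (∀ Y : Matrix (Fin n) (Fin n) ℝ, Y.PosSemidef →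
      Y ≠ Q * Matrix.diagonal (fun i => max (lam i) 0) * Qᵀ →
      ‖A - Q * Matrix.diagonal (fun i => max (lam i) 0) * Qᵀ‖ < ‖A - Y‖) :=
  psd_projection_unique_minimizer_general A Q lam hQ hdecomp
end
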